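/- Let μ, ν be probability measures on 𝕋² with ‖μ−ν‖_{TV} ≤ 1 and suppose ν has an L^∞ density. Then there is a universal constant C > 0 such that Var(μ) ≥ C⁻¹ ‖ν‖_{L^∞(𝕋²)}⁻¹. -/

import Mathlib

/-!
Since `ν` has density at most `M = ‖ν‖_∞`, a ball of radius `r` with `r² = 1/(16M)` has
`ν`-mass at most `M · 4r² = 1/4`. Total variation distance at most `1` lets `μ` exceed `ν` on
any set by at most `1/2`, so `μ` gives such a ball mass at most `3/4`, whatever its centre `a`.
By Markov's inequality `∫ |x - a|² dμ ≥ r² · μ(B(a, r)ᶜ) ≥ r²/4 = 1/(64M)`.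
-/

open MeasureTheory
open scoped ENNReal

noncomputable section

instance : Fact ((0:ℝ) < 1) := ⟨one_pos⟩

/-- The two-dimensional torus. -/
abbrev T2 : Type := AddCircle (1:ℝ) × AddCircle (1:ℝ)

/-- `Var(μ) := inf_{a ∈ 𝕋²} ∫ |x − a|² dμ(x)`. -/
def torusVar (μ : Measure T2) : ℝ := ⨅ a : T2, ∫ x, dist x a ^ 2 ∂μ

open Metric Set

namespace MeasureTheory

variable {α : Type*} [MeasurableSpace α]

theorem Measure.withDensity_apply_le_essSup_mul (μ : Measure α) [SFinite μ] (g : α → ℝ≥0∞)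
    (s : Set α) : μ.withDensity g s ≤ essSup g μ * μ s := by
  rw [withDensity_apply' _ s, ← setLIntegral_const]
  exact lintegral_mono_ae (ae_restrict_of_ae (ENNReal.ae_le_essSup g))

theorem Measure.withDensity_real_le_essSup_mul (μ : Measure α) [IsFiniteMeasure μ]
    {g : α → ℝ≥0∞} (hg : essSup g μ ≠ ∞) (s : Set α) :
    (μ.withDensity g).real s ≤ (essSup g μ).toReal * μ.real s := by
  rw [measureReal_def, measureReal_def, ← ENNReal.toReal_mul]
  exact ENNReal.toReal_mono (ENNReal.mul_ne_top hg (measure_ne_top _ _))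
    (μ.withDensity_apply_le_essSup_mul g s)

theorem Measure.measureReal_le_add_half_totalVariation {μ ν : Measure α} [IsFiniteMeasure μ]
    [IsFiniteMeasure ν] (huniv : μ univ = ν univ) {s : Set α} (hs : MeasurableSet s) :
    μ.real s ≤ ν.real s + (μ.toSignedMeasure - ν.toSignedMeasure).totalVariation.real univ / 2 := by
  set σ := μ.toSignedMeasure - ν.toSignedMeasure
  set P := σ.toJordanDecomposition.posPart
  set N := σ.toJordanDecomposition.negPart
  have hσs : μ.real s - ν.real s = P.real s - N.real s := by
    rw [← Measure.toSignedMeasure_sub_apply hs]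
    exact σ.apply_eq_posPart_real_sub_negPart_real hs
  have hσuniv : σ univ = P.real univ - N.real univ :=
    σ.apply_eq_posPart_real_sub_negPart_real MeasurableSet.univ
  rw [Measure.toSignedMeasure_sub_apply MeasurableSet.univ, measureReal_def, measureReal_def,
    huniv, sub_self] at hσuniv
  have hTV : σ.totalVariation.real univ = P.real univ + N.real univ :=
    measureReal_add_apply
  have hPs : P.real s ≤ P.real univ := measureReal_mono (subset_univ s)
  have hNs : 0 ≤ N.real s := measureReal_nonneg
  linarith

end MeasureTheory

theorem sq_mul_measureReal_compl_ball_le_integral_dist_sq {X : Type*} [PseudoMetricSpace X]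
    [MeasurableSpace X] {μ : Measure X} {a : X} {r : ℝ} (hr : 0 ≤ r)
    (hint : Integrable (fun x ↦ dist x a ^ 2) μ) :
    r ^ 2 * μ.real (ball a r)ᶜ ≤ ∫ x, dist x a ^ 2 ∂μ := by
  have hset : (ball a r)ᶜ = {x | r ^ 2 ≤ dist x a ^ 2} := by
    ext x
    simp [pow_le_pow_iff_left₀ hr dist_nonneg]
  rw [hset]
  exact mul_meas_ge_le_integral_of_nonneg (ae_of_all _ fun _ ↦ by positivity) hint _

instance : IsProbabilityMeasure (volume : Measure T2) :=
  ⟨by rw [← univ_prod_univ, Measure.volume_eq_prod, Measure.prod_prod]; simp⟩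

theorem T2.volume_real_ball_le (a : T2) {r : ℝ} (hr : 0 ≤ r) :
    volume.real (ball a r) ≤ 4 * r ^ 2 := by
  obtain ⟨a₁, a₂⟩ := a
  refine (measureReal_mono ball_subset_closedBall).trans ?_
  rw [measureReal_def, ← closedBall_prod_same, Measure.volume_eq_prod, Measure.prod_prod,
    AddCircle.volume_closedBall, AddCircle.volume_closedBall, ENNReal.toReal_mul,
    ENNReal.toReal_ofReal (by positivity)]
  have h : min (1 : ℝ) (2 * r) ≤ 2 * r := min_le_right _ _
  have h₀ : 0 ≤ min (1 : ℝ) (2 * r) := by positivity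
  nlinarith

/-- If `μ, ν` are probability measures on `𝕋²` with `‖μ − ν‖_{TV} ≤ 1` and `ν` has
an `L^∞` density, then `Var(μ) ≥ C⁻¹ ‖ν‖_{L^∞}⁻¹` for a universal constant `C > 0`. -/
theorem variance_lower_bound_of_TV_close :
    ∃ C : ℝ, 0 < C ∧
      ∀ (μ ν : Measure T2) [IsProbabilityMeasure μ] [IsProbabilityMeasure ν]
        (g : T2 → ℝ≥0∞),
        ν = volume.withDensity g →
        essSup g volume ≠ ⊤ →
        (μ.toSignedMeasure - ν.toSignedMeasure).totalVariation Set.univ ≤ 1 →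
        torusVar μ ≥ C⁻¹ * ((essSup g volume).toReal)⁻¹ := by
  refine ⟨64, by norm_num, ?_⟩
  intro μ ν _ _ g hν_eq hg hTV
  set M := (essSup g volume).toReal
  have hν : ∀ s, ν.real s ≤ M * volume.real s :=
    hν_eq ▸ volume.withDensity_real_le_essSup_mul hg
  have hM : 0 < M := one_pos.trans_le (by simpa using hν univ)
  have hTV : (μ.toSignedMeasure - ν.toSignedMeasure).totalVariation.real univ ≤ 1 :=
    ENNReal.toReal_le_of_le_ofReal zero_le_one (by simpa using hTV)
  set r := √(1 / (16 * M))
  have hr : r ^ 2 = 1 / (16 * M) := Real.sq_sqrt (by positivity)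
  refine le_ciInf fun a ↦ ?_
  have hball : μ.real (ball a r) ≤ 3 / 4 := calc
    μ.real (ball a r) ≤ ν.real (ball a r) + 1 / 2 := by
      have := Measure.measureReal_le_add_half_totalVariation (μ := μ) (ν := ν) (by simp)
        (measurableSet_ball (x := a) (ε := r))
      linarith
    _ ≤ M * (4 * r ^ 2) + 1 / 2 := by
      gcongr
      exact (hν _).trans (by gcongr; exact T2.volume_real_ball_le a (Real.sqrt_nonneg _))
    _ = 3 / 4 := by rw [hr]; field_simp; norm_num
  have hint : Integrable (fun x ↦ dist x a ^ 2) μ :=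
    (by fun_prop : Continuous fun x : T2 ↦ dist x a ^ 2).integrable_of_hasCompactSupport
      (HasCompactSupport.of_compactSpace _)
  calc (64 : ℝ)⁻¹ * M⁻¹ = r ^ 2 * (1 / 4) := by rw [hr]; field_simp; norm_num
    _ ≤ r ^ 2 * μ.real (ball a r)ᶜ := by
      rw [probReal_compl_eq_one_sub measurableSet_ball]
      gcongr
      linarith
    _ ≤ ∫ x, dist x a ^ 2 ∂μ :=
      sq_mul_measureReal_compl_ball_le_integral_dist_sq (Real.sqrt_nonneg _) hint

end
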